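/- arXiv:1909.07106 — 2 statements merged into one kernel-verified Lean document; each statement's English description precedes it below -/
import Mathlib

section
/- For b in (0,1] and every x in (1/2,1), there exists n ∈ ℕ such that f^n(x) ∈ (1/2 - b/4, 1/2], where f = f_{0,b}; in particular f^n(x) is a fixed point of f. -/
/-! On `(1/2, 1)` the map is `y ↦ y - b y (1 - y)`, so `1 - f y = (1 - y)(1 + b y) ≥ (1 + b/2)(1 - y)`:
while an orbit stays above `1/2` its distance to `1` grows geometrically, so it must eventually
drop to `1/2` or below. The step that does so lands above `1/2 - b/4`, since `y (1 - y) ≤ 1/4`,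
and points of `[0, 1/2]` are fixed. -/

noncomputable def f0b (b x : ℝ) : ℝ :=
  if x ≤ 1/2 then x else x * (1 - b + b * x)

section

variable {b x : ℝ}

lemma f0b_of_le_half (h : x ≤ 1/2) : f0b b x = x := if_pos h

lemma f0b_of_half_lt (h : 1/2 < x) : f0b b x = x * (1 - b + b * x) := if_neg h.not_ge

lemma one_sub_f0b_of_half_lt (h : 1/2 < x) : 1 - f0b b x = (1 - x) * (1 + b * x) := by
  rw [f0b_of_half_lt h]; ring

lemma half_sub_quarter_lt_f0b (hb : 0 ≤ b) (h : 1/2 < x) : 1/2 - b/4 < f0b b x := by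
  have : f0b b x = x - b/4 + b * (x - 1/2) ^ 2 := by rw [f0b_of_half_lt h]; ring
  rw [this]; linarith [mul_nonneg hb (sq_nonneg (x - 1/2))]

lemma f0b_lt_one (hb : 0 ≤ b) (h₁ : 1/2 < x) (h₂ : x < 1) : f0b b x < 1 := by
  have := one_sub_f0b_of_half_lt (b := b) h₁
  nlinarith [mul_pos (sub_pos.2 h₂) (by positivity : 0 < 1 + b * x)]

lemma mul_one_sub_le_one_sub_f0b (hb : 0 ≤ b) (h₁ : 1/2 < x) (h₂ : x < 1) :
    (1 + b/2) * (1 - x) ≤ 1 - f0b b x := by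
  rw [one_sub_f0b_of_half_lt h₁, mul_comm]
  gcongr
  nlinarith

lemma f0b_iterate_mem_Ioc_or (hb : 0 ≤ b) (hx : x ∈ Set.Ioo (1/2 : ℝ) 1) (n : ℕ) :
    (f0b b)^[n] x ∈ Set.Ioc (1/2 - b/4) (1/2 : ℝ) ∨
      (f0b b)^[n] x ∈ Set.Ioo (1/2 : ℝ) 1 ∧ (1 + b/2) ^ n * (1 - x) ≤ 1 - (f0b b)^[n] x := by
  induction n with
  | zero => exact .inr ⟨hx, by simp⟩
  | succ n ih =>
    rw [Function.iterate_succ_apply']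
    rcases ih with hcap | ⟨⟨hy₁, hy₂⟩, hdist⟩
    · exact .inl (by rwa [f0b_of_le_half hcap.2])
    · by_cases hle : f0b b ((f0b b)^[n] x) ≤ 1/2
      · exact .inl ⟨half_sub_quarter_lt_f0b hb hy₁, hle⟩
      · refine .inr ⟨⟨not_le.1 hle, f0b_lt_one hb hy₁ hy₂⟩, ?_⟩
        calc (1 + b/2) ^ (n + 1) * (1 - x) = (1 + b/2) * ((1 + b/2) ^ n * (1 - x)) := by ring
          _ ≤ (1 + b/2) * (1 - (f0b b)^[n] x) := by gcongr
          _ ≤ 1 - f0b b ((f0b b)^[n] x) := mul_one_sub_le_one_sub_f0b hb hy₁ hy₂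

end

theorem stmt3 (b : ℝ) (hb : b ∈ Set.Ioc (0:ℝ) 1)
    (x : ℝ) (hx : x ∈ Set.Ioo (1/2 : ℝ) 1) :
    ∃ n : ℕ, (f0b b)^[n] x ∈ Set.Ioc (1/2 - b/4) (1/2 : ℝ) ∧
      f0b b ((f0b b)^[n] x) = (f0b b)^[n] x := by
  obtain ⟨n, hn⟩ := pow_unbounded_of_one_lt ((1/2) / (1 - x)) (by linarith [hb.1] : (1:ℝ) < 1 + b/2)
  have hgrowth : 1/2 < (1 + b/2) ^ n * (1 - x) := (div_lt_iff₀ (by linarith [hx.2])).1 hn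
  refine ⟨n, ?_⟩
  rcases f0b_iterate_mem_Ioc_or hb.1.le hx n with hcap | ⟨hy, hdist⟩
  · exact ⟨hcap, f0b_of_le_half hcap.2⟩
  · linarith [hy.1]
end

section
/- Let a ∈ (0,1) and b ∈ (0,1] with a/(a+1) < b ≤ 4a/(4-a²). Then x₂ = (ab + 2b - √(ab(ab+4)))/(2ab) satisfies 0 < x₂ ≤ 1/2. -/
/-! Both bounds reduce, after squaring, to the two hypotheses on `b`: with `s = √(ab(ab+4))`,
`s < ab + 2b` is `a < b(a+1)` and `2b ≤ s` is `b(4 - a²) ≤ 4a`. -/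

open Real

lemma sqrt_mul_mul_add_four_lt {a b : ℝ} (ha : 0 < a) (hb : 0 < b) (h : a < b * (a + 1)) :
    √(a * b * (a * b + 4)) < a * b + 2 * b := by
  rw [sqrt_lt' (by positivity)]
  nlinarith

lemma two_mul_le_sqrt_mul_mul_add_four {a b : ℝ} (hb : 0 ≤ b) (h : b * (4 - a ^ 2) ≤ 4 * a) :
    2 * b ≤ √(a * b * (a * b + 4)) := by
  apply le_sqrt_of_sq_le
  nlinarith

theorem stmt12 (a b : ℝ) (ha : a ∈ Set.Ioo (0:ℝ) 1) (hb : b ∈ Set.Ioc (0:ℝ) 1)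
    (h1 : a / (a + 1) < b) (h2 : b ≤ 4 * a / (4 - a^2)) :
    0 < (a * b + 2 * b - Real.sqrt (a * b * (a * b + 4))) / (2 * a * b) ∧
    (a * b + 2 * b - Real.sqrt (a * b * (a * b + 4))) / (2 * a * b) ≤ 1/2 := by
  obtain ⟨ha0, ha1⟩ := ha
  have hb0 : 0 < b := hb.1
  have hab : 0 < 2 * a * b := by positivity
  have h1' : a < b * (a + 1) := (div_lt_iff₀ (by linarith)).mp h1
  have h2' : b * (4 - a ^ 2) ≤ 4 * a := (le_div_iff₀ (by nlinarith)).mp h2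
  have hlt := sqrt_mul_mul_add_four_lt ha0 hb0 h1'
  have hge := two_mul_le_sqrt_mul_mul_add_four hb0.le h2'
  constructor
  · exact div_pos (by linarith) hab
  · rw [div_le_iff₀ hab]
    linarith
end
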